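/- In the chain MDP with parameters n ∈ ℕ and γ ∈ (0,1), consider Howard's policy iteration started from π_0 ≡ d and iterating π_{k+1} = the greedy policy with respect to v^{π_k} (ties broken towards d). Then for every 0 ≤ k ≤ n+1, the iterate π_k plays u exactly on the states s_i with n+1−k ≤ i ≤ n. Consequently π_k ≠ π_{k+1} for all 0 ≤ k ≤ n while π_{n+1} = π_{n+2}, so policy iteration performs exactly n+1 = |S|−1 policy changes before converging, where |S| = n+2 is the number of states. -/

import Mathlib

/-- States of the chain MDP with parameters `n`: `s_0, …, s_{n+1}`, where `s_{n+1}`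
is absorbing. Actions: `true = u`, `false = d`. -/
def chainStep (n : ℕ) (s : Fin (n + 2)) (a : Bool) : Fin (n + 2) :=
  if a then (if h : s.val < n then ⟨s.val + 1, by omega⟩ else s) else ⟨n + 1, by omega⟩

/-- Reward of the chain MDP: `r(s_n, u) = 1 - γ` and `0` otherwise. -/
def chainReward (n : ℕ) (γ : ℝ) (s : Fin (n + 2)) (a : Bool) : ℝ :=
  if s.val = n ∧ a = true then 1 - γ else 0

/-- Deterministic trajectory of a policy `π` from state `s`. -/
def chainTraj (n : ℕ) (π : Fin (n + 2) → Bool) (s : Fin (n + 2)) : ℕ → Fin (n + 2)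
  | 0 => s
  | t + 1 => chainStep n (chainTraj n π s t) (π (chainTraj n π s t))

/-- Value `v^π(s) = ∑ₜ γ^t r(x_t, π(x_t))` of a policy `π` in the chain MDP. -/
noncomputable def chainValue (n : ℕ) (γ : ℝ) (π : Fin (n + 2) → Bool) (s : Fin (n + 2)) : ℝ :=
  ∑' t : ℕ, γ ^ t * chainReward n γ (chainTraj n π s t) (π (chainTraj n π s t))

/-- The greedy policy w.r.t. a value function `v`: at each state pick the action
maximizing `r(s,a) + γ·v(f(s,a))`, choosing `d` (= `false`) in case of a tie. -/
noncomputable def chainGreedy (n : ℕ) (γ : ℝ) (v : Fin (n + 2) → ℝ) (s : Fin (n + 2)) : Bool :=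
  if chainReward n γ s true + γ * v (chainStep n s true) >
     chainReward n γ s false + γ * v (chainStep n s false) then true else false

/-- Howard's policy iteration on the chain MDP, started from the all-`d` policy. -/
noncomputable def chainPI (n : ℕ) (γ : ℝ) : ℕ → (Fin (n + 2) → Bool)
  | 0 => fun _ => false
  | k + 1 => chainGreedy n γ (chainValue n γ (chainPI n γ k))

/-!
Induction on `k` shows `π_k` is the policy playing `u` exactly on the top `k` states
`s_{n+1-k}, …, s_n`. Under such a policy a state of that segment climbs to `s_n` and collects
`1 - γ` forever from time `n - i` on, so its value is `γ ^ (n - i)`, while every other state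
drops to `s_{n+1}` at once and has value `0`. Action `d` is therefore worth `0` everywhere, and
`u` is strictly better exactly at `s_n` and at the states whose successor lies in the segment:
one greedy step extends the segment by one state, until it covers `s_0, …, s_n`.
-/

def chainUpPolicy (n k : ℕ) (s : Fin (n + 2)) : Bool :=
  decide (n + 1 - k ≤ s.val ∧ s.val ≤ n)

@[simp]
lemma chainUpPolicy_eq_true_iff {n k : ℕ} {s : Fin (n + 2)} :
    chainUpPolicy n k s = true ↔ n + 1 - k ≤ s.val ∧ s.val ≤ n := by
  simp [chainUpPolicy]

lemma chainStep_false (n : ℕ) (s : Fin (n + 2)) : chainStep n s false = Fin.last (n + 1) :=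
  rfl

lemma chainStep_true_of_lt {n : ℕ} {s : Fin (n + 2)} (hs : s.val < n) :
    (chainStep n s true).val = s.val + 1 := by
  simp [chainStep, hs]

lemma chainStep_true_of_le {n : ℕ} {s : Fin (n + 2)} (hs : n ≤ s.val) :
    chainStep n s true = s := by
  simp [chainStep, not_lt.mpr hs]

lemma chainReward_false (n : ℕ) (γ : ℝ) (s : Fin (n + 2)) : chainReward n γ s false = 0 := by
  simp [chainReward]

lemma chainReward_true (n : ℕ) (γ : ℝ) (s : Fin (n + 2)) :
    chainReward n γ s true = if s.val = n then 1 - γ else 0 := by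
  simp [chainReward]

lemma chainGreedy_eq_true_iff {n : ℕ} {γ : ℝ} {v : Fin (n + 2) → ℝ} {s : Fin (n + 2)} :
    chainGreedy n γ v s = true ↔
      γ * v (Fin.last (n + 1)) < chainReward n γ s true + γ * v (chainStep n s true) := by
  simp [chainGreedy, chainStep_false, chainReward_false]

lemma tsum_geometric_tail {γ : ℝ} (hγ : |γ| < 1) (d : ℕ) :
    ∑' t : ℕ, (if d ≤ t then γ ^ t * (1 - γ) else 0) = γ ^ d := by
  have hγ₁ : 1 - γ ≠ 0 := by linarith [(abs_lt.mp hγ).2]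
  have hshift : HasSum (fun t : ℕ => if d ≤ t + d then γ ^ (t + d) * (1 - γ) else 0) (γ ^ d) := by
    have hgeom := (hasSum_geometric_of_abs_lt_one hγ).mul_left (γ ^ d * (1 - γ))
    rw [mul_assoc, mul_inv_cancel₀ hγ₁, mul_one] at hgeom
    refine hgeom.congr_fun fun t => ?_
    rw [if_pos (Nat.le_add_left d t), pow_add]
    ring
  rw [hasSum_nat_add_iff (f := fun t => if d ≤ t then γ ^ t * (1 - γ) else 0) d,
    Finset.sum_eq_zero fun t ht => if_neg (by simpa using ht), add_zero] at hshift
  exact hshift.tsum_eq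

lemma chainValue_eq_zero_of_down {n : ℕ} (γ : ℝ) {π : Fin (n + 2) → Bool} {s : Fin (n + 2)}
    (hs : π s = false) (hlast : π (Fin.last (n + 1)) = false) : chainValue n γ π s = 0 := by
  have hdown : ∀ t, π (chainTraj n π s t) = false := by
    intro t
    induction t with
    | zero => exact hs
    | succ t ih => rwa [chainTraj, ih, chainStep_false]
  simp [chainValue, hdown, chainReward_false]

section Climb

variable {n : ℕ} {π : Fin (n + 2) → Bool} {s : Fin (n + 2)}

lemma chainTraj_val_of_up (hs : s.val ≤ n)
    (hup : ∀ i : Fin (n + 2), s ≤ i → i.val ≤ n → π i = true) (t : ℕ) :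
    (chainTraj n π s t).val = min (s.val + t) n ∧ π (chainTraj n π s t) = true := by
  induction t with
  | zero => exact ⟨by simpa [chainTraj], hup s le_rfl hs⟩
  | succ t ih =>
    obtain ⟨hval, hπ⟩ := ih
    have hval' : (chainTraj n π s (t + 1)).val = min (s.val + (t + 1)) n := by
      rw [chainTraj, hπ]
      rcases lt_or_ge (chainTraj n π s t).val n with hlt | hge
      · rw [chainStep_true_of_lt hlt]; omega
      · rw [chainStep_true_of_le hge]; omega
    exact ⟨hval', hup _ (by rw [Fin.le_def, hval']; omega) (by omega)⟩

lemma chainValue_of_up {γ : ℝ} (hγ : |γ| < 1) (hs : s.val ≤ n)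
    (hup : ∀ i : Fin (n + 2), s ≤ i → i.val ≤ n → π i = true) :
    chainValue n γ π s = γ ^ (n - s.val) := by
  have hterm : ∀ t, γ ^ t * chainReward n γ (chainTraj n π s t) (π (chainTraj n π s t)) =
      if n - s.val ≤ t then γ ^ t * (1 - γ) else 0 := by
    intro t
    obtain ⟨hval, hπ⟩ := chainTraj_val_of_up hs hup t
    rw [hπ, chainReward_true, hval]
    by_cases ht : n - s.val ≤ t
    · rw [if_pos (by omega), if_pos ht]
    · rw [if_neg (by omega), if_neg ht, mul_zero]
  rw [chainValue, tsum_congr hterm, tsum_geometric_tail hγ]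

end Climb

lemma chainValue_chainUpPolicy {n : ℕ} {γ : ℝ} (hγ : |γ| < 1) (k : ℕ) (s : Fin (n + 2)) :
    chainValue n γ (chainUpPolicy n k) s =
      if n + 1 - k ≤ s.val ∧ s.val ≤ n then γ ^ (n - s.val) else 0 := by
  split_ifs with hs
  · refine chainValue_of_up hγ hs.2 fun i hi hin => ?_
    rw [Fin.le_def] at hi
    simp only [chainUpPolicy_eq_true_iff]
    omega
  · exact chainValue_eq_zero_of_down γ
      (Bool.eq_false_iff.mpr (mt chainUpPolicy_eq_true_iff.mp hs)) (by simp [chainUpPolicy])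

lemma chainGreedy_chainValue_chainUpPolicy {n : ℕ} {γ : ℝ} (hγ₀ : 0 < γ) (hγ₁ : γ < 1)
    (k : ℕ) : chainGreedy n γ (chainValue n γ (chainUpPolicy n k)) = chainUpPolicy n (k + 1) := by
  have hγ : |γ| < 1 := abs_lt.mpr ⟨by linarith, hγ₁⟩
  funext s
  rw [Bool.eq_iff_iff, chainGreedy_eq_true_iff, chainUpPolicy_eq_true_iff,
    chainValue_chainUpPolicy hγ, chainValue_chainUpPolicy hγ, chainReward_true]
  simp only [Fin.val_last, Nat.not_succ_le_self, and_false, if_false, mul_zero]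
  rcases lt_trichotomy s.val n with hlt | heq | hgt
  · rw [chainStep_true_of_lt hlt, if_neg hlt.ne, zero_add]
    split_ifs with hnext
    · exact iff_of_true (by positivity) (by omega)
    · exact iff_of_false (by simp) (by omega)
  · have hv : 0 ≤ γ * (if n + 1 - k ≤ s.val ∧ s.val ≤ n then γ ^ (n - s.val) else 0) := by
      split_ifs <;> positivity
    rw [chainStep_true_of_le heq.ge, if_pos heq]
    exact iff_of_true (by linarith) (by omega)
  · rw [chainStep_true_of_le hgt.le, if_neg hgt.ne', if_neg (by omega)]
    exact iff_of_false (by simp) (by omega)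

lemma chainUpPolicy_ne_succ {n k : ℕ} (hk : k ≤ n) :
    chainUpPolicy n k ≠ chainUpPolicy n (k + 1) := fun h => by
  have := congrFun h ⟨n - k, by omega⟩
  simp only [chainUpPolicy, decide_eq_decide] at this
  omega

lemma chainPI_eq_chainUpPolicy {n : ℕ} {γ : ℝ} (hγ₀ : 0 < γ) (hγ₁ : γ < 1) (k : ℕ) :
    chainPI n γ k = chainUpPolicy n k := by
  induction k with
  | zero =>
    funext s
    simp [chainPI, chainUpPolicy]
  | succ k ih => rw [chainPI, ih, chainGreedy_chainValue_chainUpPolicy hγ₀ hγ₁]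

/-- Howard's policy iteration on the chain MDP performs exactly `n+1 = |S|-1` policy
changes: for every `k ≤ n+1` the iterate `π_k` plays `u` exactly on the states `s_i`
with `n+1-k ≤ i ≤ n`; consequently `π_k ≠ π_{k+1}` for all `k ≤ n`, while
`π_{n+1} = π_{n+2}`. -/
theorem chain_policy_iteration_lower_bound (n : ℕ) (γ : ℝ) (hγ₀ : 0 < γ) (hγ₁ : γ < 1) :
    (∀ k : ℕ, k ≤ n + 1 → ∀ i : Fin (n + 2),
      chainPI n γ k i = true ↔ (n + 1 - k ≤ i.val ∧ i.val ≤ n)) ∧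
    (∀ k : ℕ, k ≤ n → chainPI n γ k ≠ chainPI n γ (k + 1)) ∧
    chainPI n γ (n + 1) = chainPI n γ (n + 2) := by
  simp only [chainPI_eq_chainUpPolicy hγ₀ hγ₁]
  refine ⟨fun k _ i => chainUpPolicy_eq_true_iff, fun k hk => chainUpPolicy_ne_succ hk, ?_⟩
  funext s
  simp [chainUpPolicy]
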